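/- For every integer k ≥ 0, the k-th moment of Y satisfies E[Y^k] ≤ 2·k!/α^k, where α := log(1/√(1 − p²)). -/

import Mathlib

/-!
For `n ≤ N` the blocks `{j, n - j}`, `j ≤ n / 2`, partition `{0, …, n}`, and `n ∉ A + A` forces
every block to miss `A`. The blocks are independent; with `x = √(1 - p²)`, a pair misses `A` with
probability `1 - p² = x²` and the singleton `{n / 2}` with probability `1 - p ≤ x`, so
`P(n ∉ A + A) ≤ x ^ (n + 1)`.

Expanding `Y ^ k` as a sum over `k`-tuples `g` of missing elements gives
`E[Y ^ k] ≤ ∑_g x ^ (max g + 1)`. Writing `x = e^(-α)`, `x ^ m = P(T > m)` for an exponential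
variable `T` of rate `α`, so the sum is `E[#{g | max g + 1 < T}] ≤ E[T ^ k] = k! / α ^ k`.
-/

open MeasureTheory Filter

/-- The Bernoulli(p) measure on `Bool`: `true` has probability `p`. -/
noncomputable def bern (p : ℝ) : Measure Bool :=
  ENNReal.ofReal p • Measure.dirac true + ENNReal.ofReal (1 - p) • Measure.dirac false

/-- The law of a random subset of `{0, …, N}` where each element is included
independently with probability `p`, encoded by indicator functions. -/
noncomputable def prodBern (p : ℝ) (N : ℕ) : Measure (Fin (N + 1) → Bool) :=
  Measure.pi fun _ => bern p

/-- `n` belongs to the sumset `A + A`, where `A ⊆ {0,…,N}` is encoded by `ω`. -/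
def inSumset {N : ℕ} (ω : Fin (N + 1) → Bool) (n : ℕ) : Prop :=
  ∃ a b : Fin (N + 1), ω a = true ∧ ω b = true ∧ (a : ℕ) + (b : ℕ) = n

/-- `Y`: the number of integers in `{0,…,N}` missing from `A + A`. -/
noncomputable def Ycount (N : ℕ) (ω : Fin (N + 1) → Bool) : ℕ :=
  {n : ℕ | n ≤ N ∧ ¬ inSumset ω n}.ncard

/-- `Z`: the number of integers in `{N+1,…,2N}` missing from `A + A`. -/
noncomputable def Zcount (N : ℕ) (ω : Fin (N + 1) → Bool) : ℕ :=
  {n : ℕ | N + 1 ≤ n ∧ n ≤ 2 * N ∧ ¬ inSumset ω n}.ncard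

/-- `W`: the number of integers in `{0,…,2N}` missing from `A + A`. -/
noncomputable def Wcount (N : ℕ) (ω : Fin (N + 1) → Bool) : ℕ :=
  {n : ℕ | n ≤ 2 * N ∧ ¬ inSumset ω n}.ncard

/-- `Ỹ`: the number of integers in `{0,…,⌊N/2⌋}` missing from `A + A`. -/
noncomputable def Ytilde (N : ℕ) (ω : Fin (N + 1) → Bool) : ℕ :=
  {n : ℕ | n ≤ N / 2 ∧ ¬ inSumset ω n}.ncard

/-- `Z̃`: the number of integers in `{⌊3N/2⌋+1,…,2N}` missing from `A + A`. -/
noncomputable def Ztilde (N : ℕ) (ω : Fin (N + 1) → Bool) : ℕ :=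
  {n : ℕ | 3 * N / 2 + 1 ≤ n ∧ n ≤ 2 * N ∧ ¬ inSumset ω n}.ncard

/-- A string of `k` bits has no two consecutive ones. -/
def noTwoOnes {k : ℕ} (x : Fin k → Bool) : Prop :=
  ∀ i : ℕ, ∀ hi : i + 1 < k, ¬(x ⟨i, Nat.lt_of_succ_lt hi⟩ = true ∧ x ⟨i + 1, hi⟩ = true)

/-- `a_k`: the probability that `k` i.i.d. Bernoulli(p) bits contain no two
consecutive 1's (with `a_0 = 1`). -/
noncomputable def aseq (p : ℝ) (k : ℕ) : ℝ :=
  ((Measure.pi fun _ : Fin k => bern p) {x | noTwoOnes x}).toReal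

open Finset Real Nat

namespace ProbabilityTheory

variable {Ω ι κ β : Type*} {mΩ : MeasurableSpace Ω} {μ : Measure Ω} [MeasurableSpace β]
  {f : ι → Ω → β}

theorem iIndepFun.measure_biInter_of_pairwiseDisjoint (hf : iIndepFun f μ)
    (hmeas : ∀ i, Measurable (f i)) {K : Finset κ} {B : κ → Finset ι}
    (hB : (K : Set κ).PairwiseDisjoint B) {E : κ → Set Ω}
    (hE : ∀ k ∈ K, MeasurableSet[MeasurableSpace.pi.comap fun ω (i : B k) ↦ f i ω] (E k)) :
    μ (⋂ k ∈ K, E k) = ∏ k ∈ K, μ (E k) := by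
  classical
  have := hf.isProbabilityMeasure
  induction K using Finset.induction_on with
  | empty => simp
  | insert a K ha ih =>
    rw [Finset.set_biInter_insert, Finset.prod_insert ha,
      ← ih (hB.subset (by simp)) fun k hk ↦ hE k (mem_insert_of_mem hk)]
    have hdisj : Disjoint (B a) (K.biUnion B) :=
      (disjoint_biUnion_right _ _ _).2 fun k hk ↦
        hB (by simp) (by simp [hk]) (by rintro rfl; exact ha hk)
    refine (hf.indepFun_finset _ _ hdisj hmeas).meas_inter (hE a (mem_insert_self a K)) ?_
    refine MeasurableSet.biInter K.countable_toSet fun k hk ↦ ?_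
    have hsub : B k ⊆ K.biUnion B := subset_biUnion_of_mem B hk
    have hproj : Measurable fun (g : K.biUnion B → β) (i : B k) ↦ g ⟨i, hsub i.2⟩ := by fun_prop
    refine MeasurableSpace.comap_mono (g := fun ω (i : K.biUnion B) ↦ f i ω) hproj.comap_le _ ?_
    rw [MeasurableSpace.comap_comp]
    exact hE k (mem_insert_of_mem hk)

end ProbabilityTheory

open ProbabilityTheory

theorem integral_sum_indicator_pow {Ω α : Type*} [MeasurableSpace Ω] (μ : Measure Ω)
    [IsFiniteMeasure μ] (s : Finset α) {E : α → Set Ω} (hE : ∀ a, MeasurableSet (E a)) (k : ℕ) :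
    ∫ ω, (∑ a ∈ s, (E a).indicator 1 ω) ^ k ∂μ
      = ∑ g ∈ Fintype.piFinset (fun _ : Fin k ↦ s), μ.real (⋂ i, E (g i)) := by
  classical
  have hexpand (ω : Ω) : (∑ a ∈ s, (E a).indicator (1 : Ω → ℝ) ω) ^ k
      = ∑ g ∈ Fintype.piFinset (fun _ : Fin k ↦ s), (⋂ i, E (g i)).indicator 1 ω := by
    rw [← Fin.prod_const, prod_univ_sum]
    refine sum_congr rfl fun g _ ↦ ?_
    simp only [Set.indicator_apply, Set.mem_iInter, Pi.one_apply, prod_boole, mem_univ,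
      true_implies]
  simp_rw [hexpand]
  rw [integral_finsetSum _ fun g _ ↦ (integrable_const 1).indicator (.iInter fun i ↦ hE _)]
  exact sum_congr rfl fun g _ ↦ integral_indicator_one (.iInter fun i ↦ hE _)

theorem integral_Ioi_pow_mul_exp_neg_mul {α : ℝ} (hα : 0 < α) (k : ℕ) :
    ∫ t in Set.Ioi 0, t ^ k * exp (-(α * t)) = k ! / α ^ (k + 1) := by
  have h := integral_rpow_mul_exp_neg_mul_Ioi (a := k + 1) (by positivity) hα
  simp only [add_sub_cancel_right, Real.rpow_natCast, Real.Gamma_nat_eq_factorial] at h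
  rw [h, ← Nat.cast_succ, Real.rpow_natCast, one_div, inv_pow, div_eq_inv_mul]

theorem integral_Ioi_indicator_exp_neg_mul {α m : ℝ} (hα : 0 < α) (hm : 0 ≤ m) :
    ∫ t in Set.Ioi 0, (Set.Ioi m).indicator (fun t ↦ exp (-(α * t))) t = exp (-(α * m)) / α := by
  rw [setIntegral_indicator measurableSet_Ioi, Set.Ioi_inter_Ioi, max_eq_right hm]
  simpa [neg_mul, div_neg, neg_div] using integral_exp_mul_Ioi (a := -α) (by linarith) m

theorem card_filter_add_one_lt_le (s : Finset ℕ) {t : ℝ} (ht : 0 ≤ t) :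
    (#{j ∈ s | ((j : ℕ) : ℝ) + 1 < t} : ℝ) ≤ t := by
  have hsub : {j ∈ s | ((j : ℕ) : ℝ) + 1 < t} ⊆ range ⌊t⌋₊ := fun j hj ↦ by
    rw [mem_filter] at hj
    exact Finset.mem_range.2 (Nat.le_floor (by exact_mod_cast hj.2.le))
  calc (#{j ∈ s | ((j : ℕ) : ℝ) + 1 < t} : ℝ) ≤ ⌊t⌋₊ := by
        simpa using (Nat.cast_le (α := ℝ)).2 (Finset.card_le_card hsub)
    _ ≤ t := Nat.floor_le ht

theorem card_filter_sup_add_one_lt_le (s : Finset ℕ) (k : ℕ) {t : ℝ} (ht : 0 ≤ t) :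
    (#{g ∈ Fintype.piFinset (fun _ : Fin k ↦ s) | ((univ.sup fun i ↦ g i + 1 : ℕ) : ℝ) < t} : ℝ)
      ≤ t ^ k := by
  have hsub : {g ∈ Fintype.piFinset (fun _ : Fin k ↦ s) | ((univ.sup fun i ↦ g i + 1 : ℕ) : ℝ) < t}
      ⊆ Fintype.piFinset fun _ ↦ {j ∈ s | ((j : ℕ) : ℝ) + 1 < t} := fun g hg ↦ by
    simp only [mem_filter, Fintype.mem_piFinset] at hg ⊢
    refine fun i ↦ ⟨hg.1 i, lt_of_le_of_lt ?_ hg.2⟩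
    exact_mod_cast le_sup (f := fun i ↦ g i + 1) (mem_univ i)
  calc _ ≤ (#(Fintype.piFinset fun _ : Fin k ↦ {j ∈ s | ((j : ℕ) : ℝ) + 1 < t}) : ℝ) := by
        exact_mod_cast Finset.card_le_card hsub
    _ = (#{j ∈ s | ((j : ℕ) : ℝ) + 1 < t} : ℝ) ^ k := by simp
    _ ≤ t ^ k := pow_le_pow_left₀ (by positivity) (card_filter_add_one_lt_le s ht) k

theorem sum_piFinset_pow_sup_add_one_le {x : ℝ} (hx0 : 0 < x) (hx1 : x < 1) (s : Finset ℕ)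
    (k : ℕ) :
    ∑ g ∈ Fintype.piFinset (fun _ : Fin k ↦ s), x ^ (univ.sup fun i ↦ g i + 1)
      ≤ k ! / log (1 / x) ^ k := by
  set α := log (1 / x)
  have hα : 0 < α := log_pos ((one_lt_div hx0).2 hx1)
  set e : ℝ → ℝ := fun t ↦ exp (-(α * t))
  have he : IntegrableOn e (Set.Ioi 0) := by
    simpa [e, neg_mul] using integrableOn_exp_mul_Ioi (neg_lt_zero.2 hα) 0
  have hx_pow (m : ℕ) : x ^ m = α * ∫ t in Set.Ioi 0, (Set.Ioi (m : ℝ)).indicator e t := by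
    rw [integral_Ioi_indicator_exp_neg_mul hα m.cast_nonneg, mul_div_cancel₀ _ hα.ne',
      ← exp_log hx0, ← exp_nat_mul]
    simp [α, log_inv, mul_comm]
  have hcount (t : ℝ) : ∑ g ∈ Fintype.piFinset (fun _ : Fin k ↦ s),
      (Set.Ioi ((univ.sup fun i ↦ g i + 1 : ℕ) : ℝ)).indicator e t
        = #{g ∈ Fintype.piFinset (fun _ : Fin k ↦ s) |
            ((univ.sup fun i ↦ g i + 1 : ℕ) : ℝ) < t} * e t := by
    simp [Set.indicator_apply, ← Finset.sum_filter]
  have hmoment := integral_Ioi_pow_mul_exp_neg_mul hα k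
  calc ∑ g ∈ Fintype.piFinset (fun _ : Fin k ↦ s), x ^ (univ.sup fun i ↦ g i + 1)
      = α * ∫ t in Set.Ioi 0, #{g ∈ Fintype.piFinset (fun _ : Fin k ↦ s) |
            ((univ.sup fun i ↦ g i + 1 : ℕ) : ℝ) < t} * e t := by
        simp_rw [hx_pow, ← mul_sum, ← hcount]
        rw [integral_finsetSum _ fun g _ ↦ he.indicator measurableSet_Ioi]
    _ ≤ α * ∫ t in Set.Ioi 0, t ^ k * e t := by
        gcongr with t ht
        · simp_rw [← hcount]
          exact integrable_finsetSum _ fun g _ ↦ he.indicator measurableSet_Ioi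
        · refine Integrable.of_integral_ne_zero ?_
          simp only [e, hmoment]
          positivity
        · exact measurableSet_Ioi.nullMeasurableSet
        · exact card_filter_sup_add_one_lt_le s k ht.le
    _ = k ! / α ^ k := by
        rw [hmoment, pow_succ]
        field_simp

theorem one_sub_pow_le_sqrt_one_sub_sq_pow {p : ℝ} (hp0 : 0 ≤ p) (hp1 : p ≤ 1) {m : ℕ}
    (hm : m ≤ 2) :
    1 - p ^ m ≤ √(1 - p ^ 2) ^ m := by
  interval_cases m
  · simp
  · rw [pow_one, pow_one, Real.le_sqrt (by linarith) (by nlinarith)]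
    nlinarith
  · rw [Real.sq_sqrt (by nlinarith)]

theorem isProbabilityMeasure_bern {p : ℝ} (hp0 : 0 ≤ p) (hp1 : p ≤ 1) :
    IsProbabilityMeasure (bern p) :=
  ⟨by simp [bern, ← ENNReal.ofReal_add hp0 (sub_nonneg.2 hp1)]⟩

theorem isProbabilityMeasure_prodBern {p : ℝ} (hp0 : 0 ≤ p) (hp1 : p ≤ 1) (N : ℕ) :
    IsProbabilityMeasure (prodBern p N) :=
  have := isProbabilityMeasure_bern hp0 hp1
  inferInstanceAs (IsProbabilityMeasure (Measure.pi _))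

theorem prodBern_not_forall_mem_eq_true {p : ℝ} (hp0 : 0 ≤ p) (hp1 : p ≤ 1) {N : ℕ}
    (B : Finset (Fin (N + 1))) :
    prodBern p N {ω | ¬ ∀ i ∈ B, ω i = true} = ENNReal.ofReal (1 - p ^ #B) := by
  have := isProbabilityMeasure_bern hp0 hp1
  have := isProbabilityMeasure_prodBern hp0 hp1 N
  have hcyl : {ω : Fin (N + 1) → Bool | ∀ i ∈ B, ω i = true} = (B : Set _).pi fun _ ↦ {true} := by
    ext; simp
  rw [← Set.compl_ofPred, prob_compl_eq_one_sub .of_discrete, hcyl, prodBern, Measure.pi_pi_finset,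
    ENNReal.ofReal_sub _ (by positivity), ENNReal.ofReal_pow hp0]
  simp [bern]

def sumBlock (N n j : ℕ) : Finset (Fin (N + 1)) := {i | (i : ℕ) = j ∨ (i : ℕ) + j = n}

theorem pairwiseDisjoint_sumBlock (N n : ℕ) :
    (range (n / 2 + 1) : Set ℕ).PairwiseDisjoint (sumBlock N n) := by
  intro j hj j' hj' hne
  simp only [coe_range, Set.mem_Iio] at hj hj'
  refine disjoint_left.2 fun i hi hi' ↦ ?_
  simp only [sumBlock, mem_filter, mem_univ, true_and] at hi hi'
  omega

theorem card_sumBlock_le_two (N n j : ℕ) : #(sumBlock N n j) ≤ 2 :=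
  calc #(sumBlock N n j) ≤ #({j, n - j} : Finset ℕ) :=
        card_le_card_of_injOn Fin.val (fun i hi ↦ by simp [sumBlock] at hi ⊢; omega)
          Fin.val_injective.injOn
    _ ≤ 2 := card_le_two

theorem card_biUnion_sumBlock {N n : ℕ} (hn : n ≤ N) :
    #((range (n / 2 + 1)).biUnion (sumBlock N n)) = n + 1 := by
  have : (range (n / 2 + 1)).biUnion (sumBlock N n) = Iic ⟨n, by omega⟩ := by
    ext i
    simp only [mem_biUnion, mem_range, sumBlock, mem_filter, mem_univ, true_and, mem_Iic,
      Fin.le_def]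
    constructor
    · rintro ⟨j, hj, h | h⟩ <;> omega
    · intro hi
      by_cases h : 2 * i ≤ n
      · exact ⟨i, by omega, .inl rfl⟩
      · exact ⟨n - i, by omega, .inr (by omega)⟩
  simp [this]

theorem setOf_not_inSumset_subset {N n : ℕ} (hn : n ≤ N) :
    {ω : Fin (N + 1) → Bool | ¬ inSumset ω n}
      ⊆ ⋂ j ∈ range (n / 2 + 1), {ω | ¬ ∀ i ∈ sumBlock N n j, ω i = true} := by
  intro ω hω
  simp only [Set.mem_iInter]
  intro j hj hblock
  rw [mem_range] at hj
  exact hω ⟨⟨j, by omega⟩, ⟨n - j, by omega⟩, hblock _ (by simp [sumBlock]),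
    hblock _ (by simp [sumBlock]; omega), by simp; omega⟩

theorem prodBern_not_inSumset_le {p : ℝ} (hp0 : 0 ≤ p) (hp1 : p ≤ 1) {N n : ℕ} (hn : n ≤ N) :
    prodBern p N {ω | ¬ inSumset ω n} ≤ ENNReal.ofReal (√(1 - p ^ 2) ^ (n + 1)) := by
  have := isProbabilityMeasure_bern hp0 hp1
  have hindep : iIndepFun (fun i (ω : Fin (N + 1) → Bool) ↦ ω i) (prodBern p N) :=
    iIndepFun_pi (X := fun _ ↦ id) fun _ ↦ aemeasurable_id
  calc prodBern p N {ω | ¬ inSumset ω n}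
      ≤ prodBern p N (⋂ j ∈ range (n / 2 + 1), {ω | ¬ ∀ i ∈ sumBlock N n j, ω i = true}) :=
        measure_mono (setOf_not_inSumset_subset hn)
    _ = ∏ j ∈ range (n / 2 + 1), ENNReal.ofReal (1 - p ^ #(sumBlock N n j)) := by
        rw [hindep.measure_biInter_of_pairwiseDisjoint (fun i ↦ measurable_pi_apply i)
          (pairwiseDisjoint_sumBlock N n)
          fun j _ ↦ ⟨{g | ¬ ∀ i, g i = true}, .of_discrete, by ext; simp⟩]
        exact prod_congr rfl fun j _ ↦ prodBern_not_forall_mem_eq_true hp0 hp1 _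
    _ ≤ ∏ j ∈ range (n / 2 + 1), ENNReal.ofReal (√(1 - p ^ 2) ^ #(sumBlock N n j)) :=
        prod_le_prod' fun j _ ↦ ENNReal.ofReal_le_ofReal
          (one_sub_pow_le_sqrt_one_sub_sq_pow hp0 hp1 (card_sumBlock_le_two N n j))
    _ = ENNReal.ofReal (√(1 - p ^ 2) ^ (n + 1)) := by
        rw [← ENNReal.ofReal_prod_of_nonneg fun _ _ ↦ by positivity, prod_pow_eq_pow_sum,
          ← card_biUnion (pairwiseDisjoint_sumBlock N n), card_biUnion_sumBlock hn]

theorem measureReal_iInter_not_inSumset_le {p : ℝ} (hp0 : 0 ≤ p) (hp1 : p ≤ 1) {N k : ℕ}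
    (g : Fin k → ℕ) (hg : ∀ i, g i ≤ N) :
    (prodBern p N).real (⋂ i, {ω | ¬ inSumset ω (g i)})
      ≤ √(1 - p ^ 2) ^ (univ.sup fun i ↦ g i + 1) := by
  have := isProbabilityMeasure_prodBern hp0 hp1 N
  refine sup_induction (p := fun m ↦ (prodBern p N).real _ ≤ √(1 - p ^ 2) ^ m)
    (by simp [measureReal_le_one]) (fun a ha b hb ↦ ?_) fun i _ ↦ ?_
  · rcases le_total a b with h | h
    · rwa [sup_eq_right.2 h]
    · rwa [sup_eq_left.2 h]
  · exact (measureReal_mono (Set.iInter_subset _ i)).trans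
      (ENNReal.toReal_le_of_le_ofReal (by positivity) (prodBern_not_inSumset_le hp0 hp1 (hg i)))

theorem Ycount_eq_sum_indicator (N : ℕ) (ω : Fin (N + 1) → Bool) :
    (Ycount N ω : ℝ) = ∑ n ∈ range (N + 1), {ω' | ¬ inSumset ω' n}.indicator 1 ω := by
  classical
  have : {n | n ≤ N ∧ ¬ inSumset ω n} = ↑{n ∈ range (N + 1) | ¬ inSumset ω n} := by
    ext; simp
  rw [Ycount, this, Set.ncard_coe_finset, card_filter]
  push_cast
  exact sum_congr rfl fun n _ ↦ by simp [Set.indicator_apply]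

/-- Bound on the `k`-th moment of `Y`: `E[Y^k] ≤ 2·k!/α^k` where
`α = log(1/√(1-p²))`. -/
theorem stmt7 (p : ℝ) (hp0 : 0 < p) (hp1 : p < 1) (N k : ℕ) :
    (∫ ω, ((Ycount N ω : ℝ)) ^ k ∂ prodBern p N) ≤
      2 * (Nat.factorial k : ℝ) / Real.log (1 / Real.sqrt (1 - p ^ 2)) ^ k := by
  have := isProbabilityMeasure_prodBern hp0.le hp1.le N
  have hx0 : 0 < √(1 - p ^ 2) := Real.sqrt_pos.2 (by nlinarith)
  have hx1 : √(1 - p ^ 2) < 1 := (Real.sqrt_lt' one_pos).2 (by nlinarith)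
  have hα : 0 < log (1 / √(1 - p ^ 2)) := log_pos ((one_lt_div hx0).2 hx1)
  simp_rw [Ycount_eq_sum_indicator]
  rw [integral_sum_indicator_pow _ _ fun _ ↦ .of_discrete]
  calc ∑ g ∈ Fintype.piFinset (fun _ : Fin k ↦ range (N + 1)),
        (prodBern p N).real (⋂ i, {ω | ¬ inSumset ω (g i)})
      ≤ ∑ g ∈ Fintype.piFinset (fun _ : Fin k ↦ range (N + 1)),
        √(1 - p ^ 2) ^ (univ.sup fun i ↦ g i + 1) :=
        sum_le_sum fun g hg ↦ measureReal_iInter_not_inSumset_le hp0.le hp1.le g fun i ↦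
          Nat.lt_succ_iff.1 (mem_range.1 (Fintype.mem_piFinset.1 hg i))
    _ ≤ k ! / log (1 / √(1 - p ^ 2)) ^ k := sum_piFinset_pow_sup_add_one_le hx0 hx1 _ k
    _ ≤ 2 * k ! / log (1 / √(1 - p ^ 2)) ^ k := by
        rw [mul_div_assoc]
        exact le_mul_of_one_le_left (by positivity) one_le_two
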